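/- arXiv:2012.14519 — 3 statements merged into one kernel-verified Lean document; each statement's English description precedes it below -/
import Mathlib

section
/- Let G, Γ be groupoids, ρ : G → Γ a groupoid homomorphism, and form the semi-direct product (G×_ρΓ)⋊Γ for the right action (g,γ)·γ' = (g,γ'⁻¹γ) of Γ on the skew product G×_ρΓ; its elements are triples (g,γ,γ') with (γ,ρ(g)) composable and t(γ') = t(γ). Then the maps φ : (G×_ρΓ)⋊Γ → G, φ(g,γ,γ') = g, and ψ : G → (G×_ρΓ)⋊Γ, ψ(g) = (g, ρ(t(g)), ρ(g)), are groupoid homomorphisms with φ∘ψ = id_G, and the function θ(u,γ) = (u, ρ(u), γ⁻¹) on the unit space G⁰∗Γ satisfies θ(t(x))·x = (ψ∘φ)(x)·θ(d(x)) for all x ∈ (G×_ρΓ)⋊Γ. Hence (G×_ρΓ)⋊Γ is similar to G. -/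
/-!
Projecting a triple `(g, γ, γ')` to `g` and sending `g` to `(g, ρ (t g), ρ g)` are functors, and the
second is a section of the first. The triple remembers, besides `g`, only the arrows `γ` and `γ'`
of `Γ`, and `θ (u, γ) = (u, ρ u, γ⁻¹)` absorbs them: in the `Γ`-coordinate its naturality is the
groupoid identity `ρ(g) · (γ'⁻¹ γ ρ(g))⁻¹ = γ⁻¹ γ'`.
-/

/-- A discrete groupoid: a set `α` with a (junk-totalized) partial multiplication,
inverse, domain map `d` and terminus map `t`.  A pair `(g, h)` is composable when
`d g = t h`; all axioms involving products are conditioned on composability. -/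
structure DGroupoid (α : Type*) where
  mul : α → α → α
  inv : α → α
  d : α → α
  t : α → α
  inv_mul : ∀ g, mul (inv g) g = d g
  mul_inv : ∀ g, mul g (inv g) = t g
  mul_d_self : ∀ g, mul g (d g) = g
  t_mul_self : ∀ g, mul (t g) g = g
  d_inv : ∀ g, d (inv g) = t g
  t_inv : ∀ g, t (inv g) = d g
  inv_inv : ∀ g, inv (inv g) = g
  d_mul : ∀ g h, d g = t h → d (mul g h) = d h
  t_mul : ∀ g h, d g = t h → t (mul g h) = t g
  mul_assoc : ∀ g h k, d g = t h → d h = t k → mul (mul g h) k = mul g (mul h k)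
  d_d : ∀ g, d (d g) = d g
  t_d : ∀ g, t (d g) = d g
  d_t : ∀ g, d (t g) = t g
  t_t : ∀ g, t (t g) = t g

/-- `x` is a unit of the groupoid `G`, i.e. `x ∈ G⁰`. -/
def DGroupoid.IsUnit {α : Type*} (G : DGroupoid α) (x : α) : Prop :=
  G.d x = x ∧ G.t x = x

/-- A right action of the groupoid `G` on the groupoid `H`, with anchor map
`p : H → G⁰`.  `act h g` represents `h · g`, which is meaningful when `t g = p h`. -/
structure RightAction {α β : Type*} (G : DGroupoid α) (H : DGroupoid β) where
  p : β → α
  p_unit : ∀ h, G.IsUnit (p h)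
  act : β → α → β
  p_act : ∀ h g, G.t g = p h → p (act h g) = G.d g
  act_comp : ∀ h g₁ g₂, G.t g₁ = p h → G.d g₁ = G.t g₂ →
      act h (G.mul g₁ g₂) = act (act h g₁) g₂
  act_mul : ∀ h₁ h₂ g, H.d h₁ = H.t h₂ → G.t g = p (H.mul h₁ h₂) →
      G.t g = p h₁ ∧ G.t g = p h₂ ∧ H.d (act h₁ g) = H.t (act h₂ g) ∧
        act (H.mul h₁ h₂) g = H.mul (act h₁ g) (act h₂ g)
  act_p : ∀ h, act h (p h) = h

/-- A homomorphism (functor) between discrete groupoids. -/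
structure IsHom {α β : Type*} (G : DGroupoid α) (K : DGroupoid β) (f : α → β) : Prop where
  map_mul : ∀ g h, G.d g = G.t h → f (G.mul g h) = K.mul (f g) (f h)
  map_inv : ∀ g, f (G.inv g) = K.inv (f g)
  map_d : ∀ g, f (G.d g) = K.d (f g)
  map_t : ∀ g, f (G.t g) = K.t (f g)

section Statement8

variable {α γ : Type*} (G : DGroupoid α) (Γ : DGroupoid γ) (ρ : α → γ)

/-- Membership in the semi-direct product `(G ×_ρ Γ) ⋊ Γ`, written on raw triples
`((g, γ), γ')`: `(γ, ρ g)` is composable and `t γ' = t γ` (the anchor of the right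
action `(g, γ) · γ' = (g, γ'⁻¹ γ)` being `p (g, γ) = t γ`). -/
def sdMem (X : (α × γ) × γ) : Prop :=
  Γ.d X.1.2 = Γ.t (ρ X.1.1) ∧ Γ.t X.2 = Γ.t X.1.2

/-- Multiplication of `(G ×_ρ Γ) ⋊ Γ`:
`(g, γ, γ') (g', γ'⁻¹ γ ρ(g), γ'') = (g g', γ, γ' γ'')`. -/
def sdMul (X Y : (α × γ) × γ) : (α × γ) × γ :=
  ((G.mul X.1.1 Y.1.1, X.1.2), Γ.mul X.2 Y.2)

/-- Inverse in `(G ×_ρ Γ) ⋊ Γ`: `(g, γ, γ')⁻¹ = (g⁻¹, γ'⁻¹ γ ρ(g), γ'⁻¹)`. -/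
def sdInv (X : (α × γ) × γ) : (α × γ) × γ :=
  ((G.inv X.1.1, Γ.mul (Γ.mul (Γ.inv X.2) X.1.2) (ρ X.1.1)), Γ.inv X.2)

/-- Domain map of `(G ×_ρ Γ) ⋊ Γ`: `d (g, γ, γ') = (d g, γ'⁻¹ γ ρ(g), d γ')`. -/
def sdD (X : (α × γ) × γ) : (α × γ) × γ :=
  ((G.d X.1.1, Γ.mul (Γ.mul (Γ.inv X.2) X.1.2) (ρ X.1.1)), Γ.d X.2)

/-- Terminus map of `(G ×_ρ Γ) ⋊ Γ`: `t (g, γ, γ') = (t g, γ, t γ')`. -/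
def sdT (X : (α × γ) × γ) : (α × γ) × γ := ((G.t X.1.1, X.1.2), Γ.t X.2)

/-- Composability in `(G ×_ρ Γ) ⋊ Γ`: `d X = t Y`. -/
def sdCmp (X Y : (α × γ) × γ) : Prop := sdD G Γ ρ X = sdT G Γ Y

/-- The map `φ : (G ×_ρ Γ) ⋊ Γ → G`, `φ (g, γ, γ') = g`. -/
def phiMap (X : (α × γ) × γ) : α := X.1.1

/-- The map `ψ : G → (G ×_ρ Γ) ⋊ Γ`, `ψ g = (g, ρ (t g), ρ g)`. -/
def psiMap (g : α) : (α × γ) × γ := ((g, ρ (G.t g)), ρ g)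

/-- The function `θ : G⁰ ∗ Γ → (G ×_ρ Γ) ⋊ Γ`, `θ (u, γ) = (u, ρ u, γ⁻¹)`. -/
def thetaMap (x : α × γ) : (α × γ) × γ := ((x.1, ρ x.1), Γ.inv x.2)

theorem DGroupoid.eq_inv_of_mul_eq_t {c x : α} (hc : G.d c = G.t x)
    (hx : G.mul c x = G.t c) : x = G.inv c :=
  calc x = G.mul (G.mul (G.inv c) c) x := by rw [G.inv_mul, hc, G.t_mul_self]
    _ = G.mul (G.inv c) (G.mul c x) := G.mul_assoc _ _ _ (G.d_inv c) hc
    _ = G.inv c := by rw [hx, ← G.d_inv, G.mul_d_self]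

theorem DGroupoid.mul_inv_cancel_left {a b : α} (h : G.t a = G.t b) :
    G.mul a (G.mul (G.inv a) b) = b :=
  calc G.mul a (G.mul (G.inv a) b) = G.mul (G.mul a (G.inv a)) b :=
        (G.mul_assoc _ _ _ (G.t_inv a).symm (by rw [G.d_inv, h])).symm
    _ = b := by rw [G.mul_inv, h, G.t_mul_self]

theorem DGroupoid.mul_inv_rev {a b : α} (h : G.d a = G.t b) :
    G.inv (G.mul a b) = G.mul (G.inv b) (G.inv a) := by
  have hinv : G.d (G.inv b) = G.t (G.inv a) := by rw [G.d_inv, G.t_inv, h]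
  refine (G.eq_inv_of_mul_eq_t ?_ ?_).symm
  · rw [G.d_mul _ _ h, G.t_mul _ _ hinv, G.t_inv]
  · calc G.mul (G.mul a b) (G.mul (G.inv b) (G.inv a))
          = G.mul a (G.mul b (G.mul (G.inv b) (G.inv a))) :=
            G.mul_assoc _ _ _ h (by rw [G.t_mul _ _ hinv, G.t_inv])
      _ = G.t (G.mul a b) := by
            rw [G.mul_inv_cancel_left (by rw [G.t_inv, h]), G.mul_inv, G.t_mul _ _ h]

theorem DGroupoid.inv_mul_t_mul_self (a : α) : G.mul (G.mul (G.inv a) (G.t a)) a = G.d a := by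
  rw [← G.d_inv, G.mul_d_self, G.inv_mul]

theorem DGroupoid.mul_inv_inv_mul_mul {a b c : α} (hab : G.d b = G.t a) (hbc : G.t c = G.t b) :
    G.mul a (G.inv (G.mul (G.mul (G.inv c) b) a)) = G.mul (G.inv b) c := by
  have hcb : G.d (G.inv c) = G.t b := by rw [G.d_inv, hbc]
  rw [G.mul_inv_rev (by rw [G.d_mul _ _ hcb, hab]), G.mul_inv_rev hcb, G.inv_inv,
    G.mul_inv_cancel_left (by rw [G.t_mul _ _ (by rw [G.d_inv, hbc]), G.t_inv, hab])]

variable {G Γ ρ} in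
theorem sdMul_thetaMap_t_eq_mul_thetaMap_d {X : (α × γ) × γ} (hX : sdMem Γ ρ X) :
    sdMul G Γ (thetaMap Γ ρ (sdT G Γ X).1) X =
      sdMul G Γ (psiMap G ρ (phiMap X)) (thetaMap Γ ρ (sdD G Γ ρ X).1) := by
  obtain ⟨⟨g, c⟩, c'⟩ := X
  simp only [sdMul, sdT, sdD, thetaMap, psiMap, phiMap, G.t_mul_self, G.mul_d_self,
    Γ.mul_inv_inv_mul_mul hX.1 hX.2]

section Hom

variable {G Γ ρ} (hρ : IsHom G Γ ρ)
include hρ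

theorem sdMem_psiMap (g : α) : sdMem Γ ρ (psiMap G ρ g) := by
  simp only [sdMem, psiMap, hρ.map_t, Γ.d_t, Γ.t_t, and_self]

theorem psiMap_mul {g g' : α} (h : G.d g = G.t g') :
    psiMap G ρ (G.mul g g') = sdMul G Γ (psiMap G ρ g) (psiMap G ρ g') := by
  simp only [psiMap, sdMul, G.t_mul _ _ h, hρ.map_mul _ _ h]

theorem psiMap_inv (g : α) : psiMap G ρ (G.inv g) = sdInv G Γ ρ (psiMap G ρ g) := by
  simp only [psiMap, sdInv, G.t_inv, hρ.map_inv, hρ.map_d, hρ.map_t, Γ.inv_mul_t_mul_self]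

theorem psiMap_d (g : α) : psiMap G ρ (G.d g) = sdD G Γ ρ (psiMap G ρ g) := by
  simp only [psiMap, sdD, G.t_d, hρ.map_d, hρ.map_t, Γ.inv_mul_t_mul_self]

theorem psiMap_t (g : α) : psiMap G ρ (G.t g) = sdT G Γ (psiMap G ρ g) := by
  simp only [psiMap, sdT, G.t_t, hρ.map_t]

end Hom

/-- Let `G, Γ` be groupoids, `ρ : G → Γ` a groupoid homomorphism,
and form the semi-direct product `(G ×_ρ Γ) ⋊ Γ` for the right action
`(g, γ) · γ' = (g, γ'⁻¹ γ)` of `Γ` on the skew product `G ×_ρ Γ`.  Then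
`φ (g, γ, γ') = g` and `ψ g = (g, ρ (t g), ρ g)` are groupoid homomorphisms with
`φ ∘ ψ = id_G`, and the function `θ (u, γ) = (u, ρ u, γ⁻¹)` on the unit space
`G⁰ ∗ Γ` satisfies `θ (t x) · x = (ψ ∘ φ) x · θ (d x)` for every
`x ∈ (G ×_ρ Γ) ⋊ Γ`.  Hence `(G ×_ρ Γ) ⋊ Γ` is similar to `G` (the direction
`φ ∘ ψ ∼ id_G` being witnessed by some `θ₀`). -/
theorem skew_semidirect_similar_to_G (hρ : IsHom G Γ ρ) :
    (∀ X Y, sdMem Γ ρ X → sdMem Γ ρ Y → sdCmp G Γ ρ X Y →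
        phiMap (sdMul G Γ X Y) = G.mul (phiMap X) (phiMap Y)) ∧
    (∀ X, sdMem Γ ρ X →
        phiMap (sdInv G Γ ρ X) = G.inv (phiMap X) ∧
        phiMap (sdD G Γ ρ X) = G.d (phiMap X) ∧
        phiMap (sdT G Γ X) = G.t (phiMap X)) ∧
    (∀ g : α, sdMem Γ ρ (psiMap G ρ g)) ∧
    (∀ g g' : α, G.d g = G.t g' →
        psiMap G ρ (G.mul g g') = sdMul G Γ (psiMap G ρ g) (psiMap G ρ g')) ∧
    (∀ g : α,
        psiMap G ρ (G.inv g) = sdInv G Γ ρ (psiMap G ρ g) ∧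
        psiMap G ρ (G.d g) = sdD G Γ ρ (psiMap G ρ g) ∧
        psiMap G ρ (G.t g) = sdT G Γ (psiMap G ρ g)) ∧
    (∀ g : α, phiMap (psiMap G ρ g) = g) ∧
    (∀ X, sdMem Γ ρ X →
        sdMul G Γ (thetaMap Γ ρ ((sdT G Γ X).1)) X =
          sdMul G Γ (psiMap G ρ (phiMap X)) (thetaMap Γ ρ ((sdD G Γ ρ X).1))) ∧
    (∃ θ₀ : α → α, ∀ g : α,
        G.mul (θ₀ (G.t g)) (phiMap (psiMap G ρ g)) = G.mul g (θ₀ (G.d g))) :=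
  ⟨fun _ _ _ _ _ => rfl,
    fun _ _ => ⟨rfl, rfl, rfl⟩,
    sdMem_psiMap hρ,
    fun _ _ => psiMap_mul hρ,
    fun g => ⟨psiMap_inv hρ g, psiMap_d hρ g, psiMap_t hρ g⟩,
    fun _ => rfl,
    fun _ => sdMul_thetaMap_t_eq_mul_thetaMap_d,
    ⟨id, fun g => (G.t_mul_self g).trans (G.mul_d_self g).symm⟩⟩

end Statement8
end

section
/- Let (G,E) be a pseudo free self-similar groupoid action on the path space of a finite directed graph E with no sources. If g₁, g₂ ∈ G and α ∈ E* satisfy d(g₁) = d(g₂) = r(α), g₁·α = g₂·α, and g₁|_α = g₂|_α, then g₁ = g₂. -/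
attribute [local instance] Classical.propDecidable

/-- A directed graph `E = (E⁰, E¹, r, s)`. -/
structure DGraph where
  V : Type
  Edge : Type
  r : Edge → V
  s : Edge → V

/-- `E.chain v l w` says that the list of edges `l` forms a path with range `v`
and source `w`: consecutive edges satisfy `r e_{i+1} = s e_i`. -/
def DGraph.chain (E : DGraph) : E.V → List E.Edge → E.V → Prop
  | v, [], w => v = w
  | v, e :: l, w => E.r e = v ∧ E.chain (E.s e) l w

theorem DGraph.chain_append (E : DGraph) :
    ∀ (l₁ : List E.Edge) (v w x : E.V) (l₂ : List E.Edge),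
      E.chain v l₁ w → E.chain w l₂ x → E.chain v (l₁ ++ l₂) x := by
  intro l₁
  induction l₁ with
  | nil =>
      intro v w x l₂ h1 h2
      have hvw : v = w := h1
      rw [List.nil_append]
      exact hvw ▸ h2
  | cons e l ih =>
      intro v w x l₂ h1 h2
      have h1' : E.r e = v ∧ E.chain (E.s e) l w := h1
      exact ⟨h1'.1, ih _ _ _ _ h1'.2 h2⟩

/-- A finite path in the graph `E`: a range vertex `r μ`, a compatible list of
edges, and a source vertex `s μ`.  Vertices are the paths with no edges. -/
structure Pth (E : DGraph) where
  rng : E.V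
  edges : List E.Edge
  src : E.V
  ok : E.chain rng edges src

/-- The length-zero path at a vertex `v`. -/
def Pth.ofVertex {E : DGraph} (v : E.V) : Pth E := ⟨v, [], v, rfl⟩

/-- The length-one path given by an edge `e`. -/
def Pth.ofEdge {E : DGraph} (e : E.Edge) : Pth E :=
  ⟨E.r e, [e], E.s e, ⟨rfl, rfl⟩⟩

/-- Concatenation `μ ν` of paths (meaningful when `r ν = s μ`; junk otherwise). -/
noncomputable def Pth.concat {E : DGraph} (μ ν : Pth E) : Pth E :=
  if h : ν.rng = μ.src then
    ⟨μ.rng, μ.edges ++ ν.edges, ν.src,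
      E.chain_append μ.edges μ.rng μ.src ν.src ν.edges μ.ok (h ▸ ν.ok)⟩
  else μ

/-- A (discrete) groupoid with unit space `V`: `d` and `t` are the domain and
terminus maps, `unit v = id_v`, and a pair `(g, h)` is composable when `d g = t h`. -/
structure VGroupoid (V : Type) (α : Type*) where
  d : α → V
  t : α → V
  mul : α → α → α
  inv : α → α
  unit : V → α
  d_unit : ∀ v, d (unit v) = v
  t_unit : ∀ v, t (unit v) = v
  d_inv : ∀ g, d (inv g) = t g
  t_inv : ∀ g, t (inv g) = d g
  d_mul : ∀ g h, d g = t h → d (mul g h) = d h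
  t_mul : ∀ g h, d g = t h → t (mul g h) = t g
  mul_assoc : ∀ g h k, d g = t h → d h = t k → mul (mul g h) k = mul g (mul h k)
  unit_mul : ∀ g, mul (unit (t g)) g = g
  mul_unit : ∀ g, mul g (unit (d g)) = g
  inv_mul : ∀ g, mul (inv g) g = unit (d g)
  mul_inv : ∀ g, mul g (inv g) = unit (t g)
  inv_inv : ∀ g, inv (inv g) = g

/-- A self-similar groupoid action `(G, E)` on the path space of the graph `E`:
a groupoid `G` with unit space `E⁰` together with a faithful action by partial
isomorphisms of the forest `T_E` — each `g ∈ G` maps `d(g) E*` bijectively onto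
`t(g) E*` preserving path length, sending vertices to vertices and preserving the
edge relation of `T_E` — such that for every `g ∈ G` and every edge
`e ∈ d(g) E¹` there is a unique restriction `g|_e ∈ G` with
`g · (e μ) = (g · e)(g|_e · μ)` for all `μ ∈ s(e) E*`. -/
structure SelfSimilar (E : DGraph) (α : Type*) extends VGroupoid E.V α where
  act : α → Pth E → Pth E
  act_rng : ∀ g μ, μ.rng = d g → (act g μ).rng = t g
  act_len : ∀ g μ, μ.rng = d g → (act g μ).edges.length = μ.edges.length
  act_vertex : ∀ g, act g (Pth.ofVertex (d g)) = Pth.ofVertex (t g)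
  act_mul : ∀ g h μ, d g = t h → μ.rng = d h → act (mul g h) μ = act g (act h μ)
  act_unit : ∀ v μ, μ.rng = v → act (unit v) μ = μ
  act_surj : ∀ g ν, ν.rng = t g → ∃ μ, μ.rng = d g ∧ act g μ = ν
  act_edge : ∀ g μ e, μ.rng = d g → E.r e = μ.src →
      ∃ e' : E.Edge, act g (μ.concat (Pth.ofEdge e)) = (act g μ).concat (Pth.ofEdge e')
  faithful : ∀ g₁ g₂, d g₁ = d g₂ → (∀ μ, μ.rng = d g₁ → act g₁ μ = act g₂ μ) → g₁ = g₂
  res : α → E.Edge → α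
  res_d : ∀ g e, E.r e = d g → d (res g e) = E.s e
  res_spec : ∀ g e μ, E.r e = d g → μ.rng = E.s e →
      act g ((Pth.ofEdge e).concat μ) = (act g (Pth.ofEdge e)).concat (act (res g e) μ)
  res_unique : ∀ g e k, E.r e = d g → d k = E.s e →
      (∀ μ, μ.rng = E.s e →
        act g ((Pth.ofEdge e).concat μ) = (act g (Pth.ofEdge e)).concat (act k μ)) →
      k = res g e

/-!
Induct on the path `μ`, peeling off its last edge `e`: writing `μ = μ' e` and `kᵢ = gᵢ|_μ'`,
the hypotheses split into `g₁ · μ' = g₂ · μ'`, `k₁ · e = k₂ · e` and `k₁|_e = k₂|_e`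
(restriction along `μ' e` is restriction along `μ'` followed by restriction along `e`).
Pseudo freeness applied to `k₂⁻¹ k₁` gives `k₁ = k₂`, and the induction hypothesis then
gives `g₁ = g₂`. For a vertex `μ` the action of `gᵢ` is determined by `gᵢ · μ` and `gᵢ|_μ`,
so faithfulness concludes.
-/

namespace DGraph

variable {E : DGraph}

theorem chain_src_unique : ∀ {l : List E.Edge} {v w w' : E.V},
    E.chain v l w → E.chain v l w' → w = w'
  | [], _, _, _, h, h' => h.symm.trans h'
  | _ :: _, _, _, _, h, h' => chain_src_unique h.2 h'.2

theorem exists_chain_of_chain_append : ∀ {l₁ l₂ : List E.Edge} {v x : E.V},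
    E.chain v (l₁ ++ l₂) x → ∃ w, E.chain v l₁ w ∧ E.chain w l₂ x
  | [], _, v, _, h => ⟨v, rfl, h⟩
  | _ :: _, _, _, _, h =>
    let ⟨w, h₁, h₂⟩ := exists_chain_of_chain_append h.2
    ⟨w, ⟨h.1, h₁⟩, h₂⟩

end DGraph

namespace Pth

variable {E : DGraph}

theorem ext {μ ν : Pth E} (hrng : μ.rng = ν.rng) (hedges : μ.edges = ν.edges) : μ = ν := by
  obtain ⟨v, l, w, hμ⟩ := μ
  obtain ⟨v', l', w', hν⟩ := ν
  dsimp only at hrng hedges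
  subst hrng hedges
  obtain rfl := DGraph.chain_src_unique hμ hν
  rfl

theorem concat_rng (μ ν : Pth E) : (μ.concat ν).rng = μ.rng := by
  unfold concat
  split <;> rfl

theorem concat_edges {μ ν : Pth E} (h : ν.rng = μ.src) :
    (μ.concat ν).edges = μ.edges ++ ν.edges := by
  simp only [concat, dif_pos h]

theorem concat_src {μ ν : Pth E} (h : ν.rng = μ.src) : (μ.concat ν).src = ν.src := by
  simp only [concat, dif_pos h]

theorem concat_of_rng_ne {μ ν : Pth E} (h : ν.rng ≠ μ.src) : μ.concat ν = μ := by
  simp only [concat, dif_neg h]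

theorem rng_eq_src_of_length_concat_ne {μ ν : Pth E}
    (h : (μ.concat ν).edges.length ≠ μ.edges.length) : ν.rng = μ.src := by
  by_contra hne
  exact h (by rw [concat_of_rng_ne hne])

theorem ofVertex_concat {v : E.V} {ν : Pth E} (h : ν.rng = v) : (ofVertex v).concat ν = ν :=
  ext ((concat_rng _ _).trans h.symm) (concat_edges h)

theorem ofEdge_edges_ne_nil (e : E.Edge) : (ofEdge e).edges ≠ [] :=
  List.cons_ne_nil _ _

/-- Associativity needs no condition on `C`: if `C` does not fit, both sides are `A B`. -/
theorem concat_assoc {A B : Pth E} (C : Pth E) (h : B.rng = A.src) :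
    (A.concat B).concat C = A.concat (B.concat C) := by
  have hBC : (B.concat C).rng = A.src := (concat_rng B C).trans h
  by_cases hC : C.rng = B.src
  · have hC' : C.rng = (A.concat B).src := hC.trans (concat_src h).symm
    refine ext ?_ ?_
    · rw [concat_rng, concat_rng, concat_rng]
    · rw [concat_edges hC', concat_edges h, concat_edges hBC, concat_edges hC,
        List.append_assoc]
  · rw [concat_of_rng_ne fun hC' => hC (hC'.trans (concat_src h)), concat_of_rng_ne hC]

theorem concat_inj {P₁ P₂ X₁ X₂ : Pth E} (h₁ : X₁.rng = P₁.src) (h₂ : X₂.rng = P₂.src)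
    (hlen : P₁.edges.length = P₂.edges.length) (h : P₁.concat X₁ = P₂.concat X₂) :
    P₁ = P₂ ∧ X₁ = X₂ := by
  have hedges := congrArg edges h
  rw [concat_edges h₁, concat_edges h₂] at hedges
  obtain ⟨hP, hX⟩ := List.append_inj hedges hlen
  have hrng : P₁.rng = P₂.rng := by
    rw [← concat_rng P₁ X₁, ← concat_rng P₂ X₂, h]
  have hPeq : P₁ = P₂ := ext hrng hP
  exact ⟨hPeq, ext (by rw [h₁, h₂, hPeq]) hX⟩

theorem eq_concat_ofEdge {μ : Pth E} {l : List E.Edge} {e : E.Edge} (h : μ.edges = l ++ [e]) :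
    ∃ μ' : Pth E, (ofEdge e).rng = μ'.src ∧ μ'.edges = l ∧ μ = μ'.concat (ofEdge e) := by
  obtain ⟨w, hl, ⟨rfl, -⟩⟩ := DGraph.exists_chain_of_chain_append (h ▸ μ.ok)
  refine ⟨⟨μ.rng, l, E.r e, hl⟩, rfl, rfl, ext ?_ ?_⟩
  · rw [concat_rng]
  · rw [concat_edges rfl, h]
    rfl

theorem concat_ofEdge_induction {motive : Pth E → Prop}
    (vertex : ∀ v, motive (ofVertex v))
    (concat_edge : ∀ μ e, (ofEdge e).rng = μ.src → motive μ → motive (μ.concat (ofEdge e)))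
    (μ : Pth E) : motive μ := by
  suffices h : ∀ l μ, μ.edges = l → motive μ from h _ μ rfl
  intro l
  induction l using List.reverseRecOn with
  | nil =>
    intro μ hμ
    rw [show μ = ofVertex μ.rng from ext rfl hμ]
    exact vertex _
  | append_singleton l e ih =>
    intro μ hμ
    obtain ⟨μ', he, hμ', rfl⟩ := eq_concat_ofEdge hμ
    exact concat_edge μ' e he (ih μ' hμ')

end Pth

theorem VGroupoid.mul_inv_mul_cancel {V : Type} {α : Type*} (G : VGroupoid V α) {g₁ g₂ : α}
    (ht : G.t g₁ = G.t g₂) : G.mul g₂ (G.mul (G.inv g₂) g₁) = g₁ := by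
  rw [← G.mul_assoc _ _ _ (G.t_inv g₂).symm (by rw [G.d_inv, ht]), G.mul_inv, ← ht, G.unit_mul]

namespace SelfSimilar

variable {E : DGraph} {α : Type*} (S : SelfSimilar E α)

def IsRestriction (g : α) (μ : Pth E) (k : α) : Prop :=
  S.d k = μ.src ∧
    ∀ ν : Pth E, ν.rng = μ.src → S.act g (μ.concat ν) = (S.act g μ).concat (S.act k ν)

def IsPseudoFree : Prop :=
  ∀ (g : α) (e : E.Edge), E.r e = S.d g →
    S.act g (Pth.ofEdge e) = Pth.ofEdge e → S.res g e = S.unit (E.s e) → g = S.unit (E.r e)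

variable {S}

theorem IsRestriction.eq_res {g k : α} {e : E.Edge} (hk : S.IsRestriction g (Pth.ofEdge e) k)
    (h : E.r e = S.d g) : k = S.res g e :=
  S.res_unique g e k h hk.1 hk.2

theorem IsRestriction.rng_act {g k : α} {μ ν : Pth E} (hk : S.IsRestriction g μ k)
    (hμ : μ.rng = S.d g) (hν : ν.rng = μ.src) (hne : ν.edges ≠ []) :
    (S.act k ν).rng = (S.act g μ).src := by
  apply Pth.rng_eq_src_of_length_concat_ne
  rw [← hk.2 ν hν, S.act_len g _ ((Pth.concat_rng μ ν).trans hμ), Pth.concat_edges hν,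
    List.length_append, S.act_len g μ hμ]
  simpa using hne

theorem IsRestriction.of_concat {g k m : α} {μ ν : Pth E} (hk : S.IsRestriction g μ k)
    (hm : S.IsRestriction g (μ.concat ν) m) (hμ : μ.rng = S.d g) (hν : ν.rng = μ.src)
    (hne : ν.edges ≠ []) : S.IsRestriction k ν m := by
  refine ⟨hm.1.trans (Pth.concat_src hν), fun ρ hρ => ?_⟩
  have hνρ : (ν.concat ρ).rng = μ.src := (Pth.concat_rng ν ρ).trans hν
  have hkν : (S.act k ν).rng = (S.act g μ).src := hk.rng_act hμ hν hne
  have hsplit : (S.act g μ).concat (S.act k (ν.concat ρ)) =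
      (S.act g μ).concat ((S.act k ν).concat (S.act m ρ)) := by
    rw [← hk.2 _ hνρ, ← Pth.concat_assoc ρ hν, hm.2 ρ (hρ.trans (Pth.concat_src hν).symm),
      hk.2 ν hν, Pth.concat_assoc _ hkν]
  have hkνρ : (S.act k (ν.concat ρ)).rng = (S.act g μ).src := by
    rw [← hkν, S.act_rng k _ (hνρ.trans hk.1.symm), S.act_rng k ν (hν.trans hk.1.symm)]
  exact (Pth.concat_inj hkνρ ((Pth.concat_rng _ _).trans hkν) rfl hsplit).2

theorem act_inv_mul_eq_self {g₁ g₂ : α} {μ : Pth E} (hd : S.d g₁ = S.d g₂)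
    (ht : S.t g₁ = S.t g₂) (hμ : μ.rng = S.d g₁) (h : S.act g₁ μ = S.act g₂ μ) :
    S.act (S.mul (S.inv g₂) g₁) μ = μ := by
  rw [S.act_mul _ _ _ (by rw [S.d_inv, ht]) hμ, h, ← S.act_mul _ _ _ (S.d_inv g₂) (hμ.trans hd),
    S.inv_mul, S.act_unit _ _ (hμ.trans hd)]

/-- Pseudo freeness, applied to `g₂⁻¹ g₁`. -/
theorem IsPseudoFree.eq_of_act_ofEdge_eq_of_res_eq (hpf : S.IsPseudoFree) {g₁ g₂ : α}
    {e : E.Edge} (h₁ : E.r e = S.d g₁) (h₂ : E.r e = S.d g₂)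
    (hact : S.act g₁ (Pth.ofEdge e) = S.act g₂ (Pth.ofEdge e)) (hres : S.res g₁ e = S.res g₂ e) :
    g₁ = g₂ := by
  have hd : S.d g₁ = S.d g₂ := h₁.symm.trans h₂
  have ht : S.t g₁ = S.t g₂ := by
    rw [← S.act_rng g₁ (Pth.ofEdge e) h₁, ← S.act_rng g₂ (Pth.ofEdge e) h₂, hact]
  set h := S.mul (S.inv g₂) g₁
  have hdh : E.r e = S.d h := h₁.trans (S.d_mul _ _ (by rw [S.d_inv, ht])).symm
  have hfix : S.act h (Pth.ofEdge e) = Pth.ofEdge e := act_inv_mul_eq_self hd ht h₁ hact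
  have hres_h : S.res h e = S.unit (E.s e) := by
    refine (IsRestriction.eq_res ⟨S.d_unit _, fun ν hν => ?_⟩ hdh).symm
    have hagree : S.act g₁ ((Pth.ofEdge e).concat ν) = S.act g₂ ((Pth.ofEdge e).concat ν) := by
      rw [S.res_spec g₁ e ν h₁ hν, S.res_spec g₂ e ν h₂ hν, hact, hres]
    rw [act_inv_mul_eq_self hd ht ((Pth.concat_rng _ _).trans h₁) hagree, hfix,
      S.act_unit _ _ hν]
  have hunit : h = S.unit (S.d g₂) := h₂ ▸ hpf h e hdh hfix hres_h
  calc g₁ = S.mul g₂ h := (S.toVGroupoid.mul_inv_mul_cancel ht).symm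
    _ = g₂ := by rw [hunit, S.mul_unit]

theorem eq_of_isRestriction_ofVertex {g₁ g₂ k : α} {v : E.V}
    (hk₁ : S.IsRestriction g₁ (Pth.ofVertex v) k) (hk₂ : S.IsRestriction g₂ (Pth.ofVertex v) k)
    (hd₁ : S.d g₁ = v) (hd₂ : S.d g₂ = v)
    (hact : S.act g₁ (Pth.ofVertex v) = S.act g₂ (Pth.ofVertex v)) : g₁ = g₂ := by
  refine S.faithful g₁ g₂ (hd₁.trans hd₂.symm) fun ν hν => ?_
  have hν' : ν.rng = v := hν.trans hd₁
  rw [← Pth.ofVertex_concat hν', hk₁.2 ν hν', hk₂.2 ν hν', hact]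

theorem IsPseudoFree.act_eq_and_eq_of_isRestriction_concat_ofEdge (hpf : S.IsPseudoFree)
    {g₁ g₂ k₁ k₂ m : α} {μ : Pth E} {e : E.Edge} (he : (Pth.ofEdge e).rng = μ.src)
    (hd₁ : μ.rng = S.d g₁) (hd₂ : μ.rng = S.d g₂)
    (hk₁ : S.IsRestriction g₁ μ k₁) (hk₂ : S.IsRestriction g₂ μ k₂)
    (hm₁ : S.IsRestriction g₁ (μ.concat (Pth.ofEdge e)) m)
    (hm₂ : S.IsRestriction g₂ (μ.concat (Pth.ofEdge e)) m)
    (hact : S.act g₁ (μ.concat (Pth.ofEdge e)) = S.act g₂ (μ.concat (Pth.ofEdge e))) :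
    S.act g₁ μ = S.act g₂ μ ∧ k₁ = k₂ := by
  have hne := Pth.ofEdge_edges_ne_nil e
  rw [hk₁.2 _ he, hk₂.2 _ he] at hact
  obtain ⟨hμ, he'⟩ := Pth.concat_inj (hk₁.rng_act hd₁ he hne) (hk₂.rng_act hd₂ he hne)
    (by rw [S.act_len g₁ μ hd₁, S.act_len g₂ μ hd₂]) hact
  have hr₁ : E.r e = S.d k₁ := he.trans hk₁.1.symm
  have hr₂ : E.r e = S.d k₂ := he.trans hk₂.1.symm
  have hres : S.res k₁ e = S.res k₂ e := by
    rw [← (hk₁.of_concat hm₁ hd₁ he hne).eq_res hr₁, ← (hk₂.of_concat hm₂ hd₂ he hne).eq_res hr₂]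
  exact ⟨hμ, hpf.eq_of_act_ofEdge_eq_of_res_eq hr₁ hr₂ he' hres⟩

end SelfSimilar

theorem selfSimilar_pseudoFree_cancellation_general {α : Type*} (E : DGraph)
    (S : SelfSimilar E α) (resP : α → Pth E → α)
    (hres_d : ∀ g μ, μ.rng = S.d g → S.d (resP g μ) = μ.src)
    (hres_spec : ∀ g μ ν, μ.rng = S.d g → ν.rng = μ.src →
        S.act g (μ.concat ν) = (S.act g μ).concat (S.act (resP g μ) ν))
    (hpf : ∀ (g : α) (e : E.Edge), E.r e = S.d g →
        S.act g (Pth.ofEdge e) = Pth.ofEdge e → S.res g e = S.unit (E.s e) →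
        g = S.unit (E.r e)) :
    ∀ (g₁ g₂ : α) (μ : Pth E), S.d g₁ = μ.rng → S.d g₂ = μ.rng →
      S.act g₁ μ = S.act g₂ μ → resP g₁ μ = resP g₂ μ → g₁ = g₂ := by
  have hresP : ∀ g μ, μ.rng = S.d g → S.IsRestriction g μ (resP g μ) :=
    fun g μ h => ⟨hres_d g μ h, fun ν hν => hres_spec g μ ν h hν⟩
  intro g₁ g₂ μ
  induction μ using Pth.concat_ofEdge_induction generalizing g₁ g₂ with
  | vertex v =>
    intro hd₁ hd₂ hact hres
    exact SelfSimilar.eq_of_isRestriction_ofVertex (hresP g₁ _ hd₁.symm)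
      (hres ▸ hresP g₂ _ hd₂.symm) hd₁ hd₂ hact
  | concat_edge μ e he ih =>
    intro hd₁ hd₂ hact hres
    have hd₁' : μ.rng = S.d g₁ := (hd₁.trans (Pth.concat_rng _ _)).symm
    have hd₂' : μ.rng = S.d g₂ := (hd₂.trans (Pth.concat_rng _ _)).symm
    obtain ⟨hμ, hk⟩ := SelfSimilar.IsPseudoFree.act_eq_and_eq_of_isRestriction_concat_ofEdge
      hpf he hd₁' hd₂' (hresP g₁ μ hd₁') (hresP g₂ μ hd₂') (hresP g₁ _ hd₁.symm)
      (hres ▸ hresP g₂ _ hd₂.symm) hact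
    exact ih g₁ g₂ hd₁'.symm hd₂'.symm hμ hk

/-- Let `(G, E)` be a pseudo free self-similar groupoid action on
the path space of a finite directed graph `E` with no sources (pseudo free: for every
`g ∈ G` and `e ∈ d(g) E¹`, if `g · e = e` and `g|_e = s e` then `g = r e`).  If
`g₁, g₂ ∈ G` and `α ∈ E*` satisfy `d g₁ = d g₂ = r α`, `g₁ · α = g₂ · α` and
`g₁|_α = g₂|_α`, then `g₁ = g₂`.  (Here `g|_μ` (`resP g μ`) denotes the restriction
along a path, the unique element with `d (g|_μ) = s μ` and
`g · (μ ν) = (g · μ)(g|_μ · ν)`.) -/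
theorem selfSimilar_pseudoFree_cancellation {α : Type*} (E : DGraph)
    [Fintype E.V] [Fintype E.Edge] (hns : ∀ v : E.V, ∃ e : E.Edge, E.r e = v)
    (S : SelfSimilar E α) (resP : α → Pth E → α)
    (hres_d : ∀ g μ, μ.rng = S.d g → S.d (resP g μ) = μ.src)
    (hres_spec : ∀ g μ ν, μ.rng = S.d g → ν.rng = μ.src →
        S.act g (μ.concat ν) = (S.act g μ).concat (S.act (resP g μ) ν))
    (hpf : ∀ (g : α) (e : E.Edge), E.r e = S.d g →
        S.act g (Pth.ofEdge e) = Pth.ofEdge e → S.res g e = S.unit (E.s e) →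
        g = S.unit (E.r e)) :
    ∀ (g₁ g₂ : α) (μ : Pth E), S.d g₁ = μ.rng → S.d g₂ = μ.rng →
      S.act g₁ μ = S.act g₂ μ → resP g₁ μ = resP g₂ μ → g₁ = g₂ :=
  selfSimilar_pseudoFree_cancellation_general E S resP hres_d hres_spec hpf
end

section
/- In the example self-similar groupoid action (G,E) generated by the partial isomorphisms a, b, c, the restriction of powers of a⁻¹cba along the edge e₁ satisfies (a⁻¹cba)^{2k}|_{e₁} = (a⁻¹cba)^k for every integer k ≥ 1. -/
attribute [local instance] Classical.propDecidable

/-- The example graph: vertices `u = 0`, `v = 1`, `w = 2` and edges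
`e₁ = 0, …, e₆ = 5` with `r e₁ = s e₁ = u`; `r e₂ = v`, `s e₂ = u`; `r e₃ = u`,
`s e₃ = v`; `r e₄ = r e₅ = w`, `s e₄ = s e₅ = v`; `r e₆ = v`, `s e₆ = w`. -/
abbrev exGraph : DGraph where
  V := Fin 3
  Edge := Fin 6
  r := ![0, 1, 0, 2, 2, 1]
  s := ![0, 0, 1, 1, 1, 2]

/-- Iterated product `z^n` (with respect to a multiplication `mulf` and an
identity element `e`): `z^0 = e`, `z^{n+1} = z · z^n`. -/
def gpow {α : Type*} (mulf : α → α → α) (e z : α) : ℕ → α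
  | 0 => e
  | n + 1 => mulf z (gpow mulf e z n)

/-! The element `z = a⁻¹cba` swaps `e₁` and `e₃`, with `z|_{e₁} = a` and `z|_{e₃} = a⁻¹cb`.
Hence `z²` fixes `e₁` with `z²|_{e₁} = (a⁻¹cb)a = z`, and since restriction along an edge fixed
by an element of an isotropy group is multiplicative, `z^{2k}|_{e₁} = (z²)^k|_{e₁} = z^k`. -/

theorem Pth.concat_ofVertex {E : DGraph} (μ : Pth E) (v : E.V) (hv : v = μ.src) :
    μ.concat (Pth.ofVertex v) = μ := by
  subst hv
  cases μ
  simp [Pth.concat, Pth.ofVertex]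

theorem Pth.rng_concat {E : DGraph} (μ ν : Pth E) (h : ν.rng = μ.src) :
    (μ.concat ν).rng = μ.rng := by
  rw [Pth.concat, dif_pos h]

namespace VGroupoid

variable {V : Type} {α : Type*} (G : VGroupoid V α)

theorem unit_mul_of_t {g : α} {v : V} (h : G.t g = v) : G.mul (G.unit v) g = g :=
  h ▸ G.unit_mul g

theorem mul_unit_of_d {g : α} {v : V} (h : G.d g = v) : G.mul g (G.unit v) = g :=
  h ▸ G.mul_unit g

theorem inv_unit (v : V) : G.inv (G.unit v) = G.unit v := by
  have h := G.unit_mul (G.inv (G.unit v))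
  rw [G.t_inv, G.d_unit] at h
  rw [← h, G.mul_inv, G.t_unit]

theorem inv_mul_cancel_left {g h : α} (hgh : G.d g = G.t h) :
    G.mul (G.inv g) (G.mul g h) = h := by
  rw [← G.mul_assoc _ _ _ (G.d_inv g) hgh, G.inv_mul, G.unit_mul_of_t hgh.symm]

theorem gpow_isotropy {g : α} {v : V} (hd : G.d g = v) (ht : G.t g = v) (n : ℕ) :
    G.d (gpow G.mul (G.unit v) g n) = v ∧ G.t (gpow G.mul (G.unit v) g n) = v := by
  induction n with
  | zero => exact ⟨G.d_unit v, G.t_unit v⟩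
  | succ n ih =>
    have hcomp : G.d g = G.t (gpow G.mul (G.unit v) g n) := hd.trans ih.2.symm
    exact ⟨(G.d_mul _ _ hcomp).trans ih.1, (G.t_mul _ _ hcomp).trans ht⟩

theorem gpow_two_mul {g : α} {v : V} (hd : G.d g = v) (ht : G.t g = v) (k : ℕ) :
    gpow G.mul (G.unit v) g (2 * k) = gpow G.mul (G.unit v) (G.mul g g) k := by
  induction k with
  | zero => rfl
  | succ k ih =>
    have hcomp : G.d g = G.t (gpow G.mul (G.unit v) g (2 * k)) :=
      hd.trans (G.gpow_isotropy hd ht _).2.symm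
    rw [show 2 * (k + 1) = 2 * k + 1 + 1 by ring, gpow, gpow,
      ← G.mul_assoc _ _ _ (hd.trans ht.symm) hcomp, ih]
    rfl

end VGroupoid

namespace SelfSimilar

variable {E : DGraph} {α : Type*} (S : SelfSimilar E α)

theorem act_inv_act {g : α} {μ : Pth E} (h : μ.rng = S.d g) :
    S.act (S.inv g) (S.act g μ) = μ := by
  rw [← S.act_mul _ _ μ (S.d_inv g) h, S.inv_mul, S.act_unit _ _ h]

theorem act_act_inv {g : α} {μ : Pth E} (h : μ.rng = S.t g) :
    S.act g (S.act (S.inv g) μ) = μ := by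
  simpa only [S.inv_inv] using S.act_inv_act (g := S.inv g) (h.trans (S.d_inv g).symm)

theorem act_ofVertex {g : α} {v w : E.V} (hd : S.d g = v) (ht : S.t g = w) :
    S.act g (Pth.ofVertex v) = Pth.ofVertex w := by
  subst hd ht
  exact S.act_vertex g

/-- `g · (eμ) = e'(k · μ)` for all `μ ∈ s(e)E*`: reading `e`, the state `g` of the Mealy automaton
of `(G, E)` writes `e'` and moves to `k`. -/
structure Transition (g : α) (e e' : E.Edge) (k : α) : Prop where
  r_eq : E.r e = S.d g
  act_eq : S.act g (Pth.ofEdge e) = Pth.ofEdge e'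
  res_eq : S.res g e = k
  t_res : S.t k = E.s e'

variable {S}

theorem Transition.of_forall_concat {g k : α} {e e' : E.Edge} (hd : E.r e = S.d g)
    (hdk : S.d k = E.s e) (htk : S.t k = E.s e')
    (h : ∀ μ : Pth E, μ.rng = E.s e →
      S.act g ((Pth.ofEdge e).concat μ) = (Pth.ofEdge e').concat (S.act k μ)) :
    S.Transition g e e' k := by
  have hact : S.act g (Pth.ofEdge e) = Pth.ofEdge e' := by
    have h₀ := h (Pth.ofVertex (E.s e)) rfl
    rwa [Pth.concat_ofVertex (Pth.ofEdge e) (E.s e) rfl, S.act_ofVertex hdk htk,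
      Pth.concat_ofVertex (Pth.ofEdge e') (E.s e') rfl] at h₀
  refine ⟨hd, hact, (S.res_unique g e k hd hdk fun μ hμ => ?_).symm, htk⟩
  rw [hact, h μ hμ]

theorem Transition.d_res {g k : α} {e e' : E.Edge} (t : S.Transition g e e' k) :
    S.d k = E.s e :=
  t.res_eq ▸ S.res_d g e t.r_eq

theorem Transition.r_eq_t {g k : α} {e e' : E.Edge} (t : S.Transition g e e' k) :
    E.r e' = S.t g := by
  have h := S.act_rng g (Pth.ofEdge e) t.r_eq
  rwa [t.act_eq] at h

theorem Transition.act_concat {g k : α} {e e' : E.Edge} (t : S.Transition g e e' k)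
    {μ : Pth E} (hμ : μ.rng = E.s e) :
    S.act g ((Pth.ofEdge e).concat μ) = (Pth.ofEdge e').concat (S.act k μ) := by
  rw [S.res_spec g e μ t.r_eq hμ, t.act_eq, t.res_eq]

theorem Transition.unit {v : E.V} {e : E.Edge} (he : E.r e = v) :
    S.Transition (S.unit v) e e (S.unit (E.s e)) :=
  .of_forall_concat (he.trans (S.d_unit v).symm) (S.d_unit _) (S.t_unit _) fun μ hμ => by
    rw [S.act_unit _ _ ((Pth.rng_concat _ _ hμ).trans he), S.act_unit _ _ hμ]

theorem Transition.mul {g h k l : α} {e e' e'' : E.Edge} (tg : S.Transition g e' e'' k)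
    (hgh : S.d g = S.t h) (th : S.Transition h e e' l) :
    S.Transition (S.mul g h) e e'' (S.mul k l) := by
  have hkl : S.d k = S.t l := tg.d_res.trans th.t_res.symm
  refine .of_forall_concat (th.r_eq.trans (S.d_mul g h hgh).symm)
    ((S.d_mul k l hkl).trans th.d_res) ((S.t_mul k l hkl).trans tg.t_res) fun μ hμ => ?_
  have hlμ : μ.rng = S.d l := hμ.trans th.d_res.symm
  rw [S.act_mul g h _ hgh ((Pth.rng_concat _ _ hμ).trans th.r_eq), th.act_concat hμ,
    tg.act_concat ((S.act_rng l μ hlμ).trans th.t_res), S.act_mul k l μ hkl hlμ]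

theorem Transition.inv {g k : α} {e e' : E.Edge} (t : S.Transition g e e' k) :
    S.Transition (S.inv g) e' e (S.inv k) := by
  refine .of_forall_concat (t.r_eq_t.trans (S.d_inv g).symm) ((S.d_inv k).trans t.t_res)
    ((S.t_inv k).trans t.d_res) fun μ hμ => ?_
  have hν : (S.act (S.inv k) μ).rng = E.s e := by
    rw [S.act_rng _ _ (hμ.trans ((S.d_inv k).trans t.t_res).symm), S.t_inv, t.d_res]
  conv_lhs => rw [← S.act_act_inv (hμ.trans t.t_res.symm), ← t.act_concat hν]
  rw [S.act_inv_act ((Pth.rng_concat _ _ hν).trans t.r_eq)]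

theorem Transition.gpow {g k : α} {v : E.V} {e : E.Edge} (t : S.Transition g e e k)
    (hd : S.d g = v) (ht : S.t g = v) (n : ℕ) :
    S.Transition (gpow S.mul (S.unit v) g n) e e (gpow S.mul (S.unit (E.s e)) k n) := by
  induction n with
  | zero => exact .unit (t.r_eq.trans hd)
  | succ n ih => exact t.mul (hd.trans (S.gpow_isotropy hd ht n).2.symm) ih

end SelfSimilar

theorem example_power_restriction_general {α : Type*}
    (S : SelfSimilar exGraph α) (a b c : α)
    (hda : S.d a = 0) (hta : S.t a = 1) (hdb : S.d b = 1) (htb : S.t b = 2)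
    (hdc : S.d c = 2) (htc : S.t c = 1)
    (ha1 : ∀ μ : Pth exGraph, μ.rng = 0 →
        S.act a ((Pth.ofEdge (E := exGraph) 0).concat μ) =
          (Pth.ofEdge (E := exGraph) 1).concat μ)
    (ha3 : ∀ μ : Pth exGraph, μ.rng = 1 →
        S.act a ((Pth.ofEdge (E := exGraph) 2).concat μ) =
          (Pth.ofEdge (E := exGraph) 5).concat (S.act b μ))
    (hb2 : ∀ μ : Pth exGraph, μ.rng = 0 →
        S.act b ((Pth.ofEdge (E := exGraph) 1).concat μ) =
          (Pth.ofEdge (E := exGraph) 4).concat (S.act a μ))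
    (hb6 : ∀ μ : Pth exGraph, μ.rng = 2 →
        S.act b ((Pth.ofEdge (E := exGraph) 5).concat μ) =
          (Pth.ofEdge (E := exGraph) 3).concat (S.act c μ))
    (hc4 : ∀ μ : Pth exGraph, μ.rng = 1 →
        S.act c ((Pth.ofEdge (E := exGraph) 3).concat μ) =
          (Pth.ofEdge (E := exGraph) 1).concat (S.act (S.inv a) μ))
    (hc5 : ∀ μ : Pth exGraph, μ.rng = 1 →
        S.act c ((Pth.ofEdge (E := exGraph) 4).concat μ) =
          (Pth.ofEdge (E := exGraph) 5).concat (S.act b μ))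
    :
    ∀ k : ℕ, 1 ≤ k →
      S.res (gpow S.mul (S.unit 0) (S.mul (S.inv a) (S.mul c (S.mul b a))) (2 * k)) 0 =
        gpow S.mul (S.unit 0) (S.mul (S.inv a) (S.mul c (S.mul b a))) k := by
  have tA1 : S.Transition a 0 1 (S.unit 0) :=
    .of_forall_concat hda.symm (S.d_unit 0) (S.t_unit 0) fun μ hμ => by
      rw [ha1 μ hμ, S.act_unit 0 μ hμ]
  have tA3 : S.Transition a 2 5 b := .of_forall_concat hda.symm hdb htb ha3
  have tB2 : S.Transition b 1 4 a := .of_forall_concat hdb.symm hda hta hb2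
  have tB6 : S.Transition b 5 3 c := .of_forall_concat hdb.symm hdc htc hb6
  have tC4 : S.Transition c 3 1 (S.inv a) :=
    .of_forall_concat hdc.symm ((S.d_inv a).trans hta) ((S.t_inv a).trans hda) hc4
  have tC5 : S.Transition c 4 5 b := .of_forall_concat hdc.symm hdb htb hc5
  have hba : S.d b = S.t a := hdb.trans hta.symm
  have hcb : S.d c = S.t b := hdc.trans htb.symm
  have hcba : S.d c = S.t (S.mul b a) := hcb.trans (S.t_mul b a hba).symm
  have hacb : S.d (S.inv a) = S.t (S.mul c b) := by rw [S.t_mul c b hcb, S.d_inv, hta, htc]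
  have hacba : S.d (S.inv a) = S.t (S.mul c (S.mul b a)) := by
    rw [S.t_mul c _ hcba, S.d_inv, hta, htc]
  set z := S.mul (S.inv a) (S.mul c (S.mul b a)) with hz
  have hdz : S.d z = 0 := by rw [hz, S.d_mul _ _ hacba, S.d_mul _ _ hcba, S.d_mul _ _ hba, hda]
  have htz : S.t z = 0 := by rw [hz, S.t_mul _ _ hacba, S.t_inv, hda]
  have hzz : S.d z = S.t z := hdz.trans htz.symm
  have tZ1 : S.Transition z 0 2 a := by
    have t := tA3.inv.mul hacba (tC5.mul hcba (tB2.mul hba tA1))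
    rwa [S.mul_unit_of_d hda, S.inv_mul_cancel_left hba] at t
  have tZ3 : S.Transition z 2 0 (S.mul (S.inv a) (S.mul c b)) := by
    have t := tA1.inv.mul hacba (tC4.mul hcba (tB6.mul hba tA3))
    rwa [S.inv_unit, S.unit_mul_of_t (by rw [S.t_mul _ _ hacb, S.t_inv, hda])] at t
  have tZZ : S.Transition (S.mul z z) 0 0 z := by
    have t := tZ3.mul hzz tZ1
    rwa [S.mul_assoc _ _ _ hacb (by rw [S.d_mul c b hcb, hdb, hta]),
      S.mul_assoc c b a hcb hba] at t
  intro k _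
  rw [S.gpow_two_mul hdz htz]
  exact (tZZ.gpow ((S.d_mul _ _ hzz).trans hdz) ((S.t_mul _ _ hzz).trans htz) k).res_eq

/-- In the example self-similar groupoid action `(G, E)` generated
by the partial isomorphisms `a, b, c`, the restriction of powers of `a⁻¹cba` along
the edge `e₁` satisfies `(a⁻¹cba)^{2k}|_{e₁} = (a⁻¹cba)^k` for every `k ≥ 1`. -/
theorem example_power_restriction {α : Type*}
    (S : SelfSimilar exGraph α) (a b c : α)
    (hda : S.d a = 0) (hta : S.t a = 1) (hdb : S.d b = 1) (htb : S.t b = 2)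
    (hdc : S.d c = 2) (htc : S.t c = 1)
    (ha1 : ∀ μ : Pth exGraph, μ.rng = 0 →
        S.act a ((Pth.ofEdge (E := exGraph) 0).concat μ) =
          (Pth.ofEdge (E := exGraph) 1).concat μ)
    (ha3 : ∀ μ : Pth exGraph, μ.rng = 1 →
        S.act a ((Pth.ofEdge (E := exGraph) 2).concat μ) =
          (Pth.ofEdge (E := exGraph) 5).concat (S.act b μ))
    (hb2 : ∀ μ : Pth exGraph, μ.rng = 0 →
        S.act b ((Pth.ofEdge (E := exGraph) 1).concat μ) =
          (Pth.ofEdge (E := exGraph) 4).concat (S.act a μ))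
    (hb6 : ∀ μ : Pth exGraph, μ.rng = 2 →
        S.act b ((Pth.ofEdge (E := exGraph) 5).concat μ) =
          (Pth.ofEdge (E := exGraph) 3).concat (S.act c μ))
    (hc4 : ∀ μ : Pth exGraph, μ.rng = 1 →
        S.act c ((Pth.ofEdge (E := exGraph) 3).concat μ) =
          (Pth.ofEdge (E := exGraph) 1).concat (S.act (S.inv a) μ))
    (hc5 : ∀ μ : Pth exGraph, μ.rng = 1 →
        S.act c ((Pth.ofEdge (E := exGraph) 4).concat μ) =
          (Pth.ofEdge (E := exGraph) 5).concat (S.act b μ))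
    (hra1 : S.res a 0 = S.unit 0) (hra3 : S.res a 2 = b)
    (hrb2 : S.res b 1 = a) (hrb6 : S.res b 5 = c)
    (hrc4 : S.res c 3 = S.inv a) (hrc5 : S.res c 4 = b)
    :
    ∀ k : ℕ, 1 ≤ k →
      S.res (gpow S.mul (S.unit 0) (S.mul (S.inv a) (S.mul c (S.mul b a))) (2 * k)) 0 =
        gpow S.mul (S.unit 0) (S.mul (S.inv a) (S.mul c (S.mul b a))) k :=
  example_power_restriction_general S a b c hda hta hdb htb hdc htc ha1 ha3 hb2 hb6 hc4 hc5
end
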